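/- arXiv:1706.01383 — 4 statements merged into one kernel-verified Lean document; each statement's English description precedes it below -/
import Mathlib

section
/- Let c ∈ ℝ₊^d satisfy: for every μ' ∈ B(μ), ∑_{i∈[d]} 2cᵢ(μᵢ−μᵢ')² ≥ 1, where μ has exactly s positive components μ₁ ≥ … ≥ μ_s > 0 = μ_{s+1} = … = μ_d and B(μ) = {μ' with exactly s positive components, μ'₁=μ₁, max μ' > max μ}. Then for every i ∈ {2,…,s} and every j ∈ {s+1,…,d}, cᵢμᵢ² + c_jμ₁² ≥ 1/2. -/
open Finset Function

theorem card_filter_pos_update_update {ι : Type*} [DecidableEq ι] {S : Finset ι} {f : ι → ℝ}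
    {i j : ι} {v : ℝ} (hi : i ∈ S) (hj : j ∈ S) (hfi : 0 < f i) (hfj : f j ≤ 0) (hv : 0 < v) :
    #(S.filter fun k => 0 < update (update f i 0) j v k) = #(S.filter fun k => 0 < f k) := by
  have hswap : (S.filter fun k => 0 < update (update f i 0) j v k)
      = insert j ((S.filter fun k => 0 < f k).erase i) := by
    ext k
    by_cases hkj : k = j
    · subst hkj; simp [hj, hv]
    by_cases hki : k = i
    · subst hki; simp [hkj]
    · simp [hkj, hki]
  rw [hswap, card_insert_of_notMem (by simp [hfj.not_gt]),
    card_erase_add_one (mem_filter.2 ⟨hi, hfi⟩)]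

theorem sum_mul_sq_sub_update_update {ι : Type*} [DecidableEq ι] {S : Finset ι}
    {w f : ι → ℝ} {i j : ι} (hi : i ∈ S) (hj : j ∈ S) (hij : i ≠ j) (a b : ℝ) :
    ∑ k ∈ S, w k * (f k - update (update f i a) j b k) ^ 2
      = w i * (f i - a) ^ 2 + w j * (f j - b) ^ 2 := by
  rw [sum_eq_add_of_mem i j hi hj hij]
  · simp [update_of_ne hij]
  · rintro k - ⟨hki, hkj⟩
    simp [hki, hkj]

theorem ContinuousAt.ge_of_forall_gt {f : ℝ → ℝ} {x C : ℝ} (hf : ContinuousAt f x)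
    (h : ∀ y, x < y → C ≤ f y) : C ≤ f x :=
  ge_of_tendsto (hf.tendsto.mono_left nhdsWithin_le_nhds) (eventually_nhdsWithin_of_forall (s := Set.Ioi x) h)

section SortedProfile

variable {d s : ℕ} {μ : ℕ → ℝ}
  (hsorted : ∀ i j, 1 ≤ i → i ≤ j → j ≤ s → μ j ≤ μ i)
  (hpos : 0 < μ s) (hzero : ∀ j, s < j → j ≤ d → μ j = 0)
include hsorted hpos

theorem pos_of_mem_Icc_one {k : ℕ} (hk : k ∈ Icc 1 s) : 0 < μ k := by
  rw [mem_Icc] at hk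
  exact hpos.trans_le (hsorted k s hk.1 hk.2 le_rfl)

include hzero

theorem filter_pos_eq_Icc_one (hsd : s ≤ d) : (Icc 1 d).filter (fun k => 0 < μ k) = Icc 1 s := by
  ext k
  simp only [mem_filter, mem_Icc]
  refine ⟨fun ⟨⟨hk1, hkd⟩, hk⟩ => ⟨hk1, ?_⟩, fun hk => ⟨⟨hk.1, hk.2.trans hsd⟩, ?_⟩⟩
  · by_contra! hks
    exact hk.ne' (hzero k hks hkd)
  · exact pos_of_mem_Icc_one hsorted hpos (mem_Icc.2 hk)

theorem sup'_Icc_one_le (hs : 1 ≤ s) (hne : (Icc 1 d).Nonempty) : (Icc 1 d).sup' hne μ ≤ μ 1 := by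
  refine sup'_le _ _ fun k hk => ?_
  rw [mem_Icc] at hk
  rcases le_or_gt k s with hks | hks
  · exact hsorted 1 k le_rfl hk.1 hks
  · rw [hzero k hks hk.2]
    exact (pos_of_mem_Icc_one hsorted hpos (mem_Icc.2 ⟨le_rfl, hs⟩)).le

end SortedProfile

theorem constraint_set_second_condition_general
    (d s : ℕ) (μ c : ℕ → ℝ) (hs : 2 ≤ s) (hsd : s ≤ d)
    (hsorted : ∀ i j, 1 ≤ i → i ≤ j → j ≤ s → μ j ≤ μ i)
    (hpos : 0 < μ s)
    (hzero : ∀ j, s < j → j ≤ d → μ j = 0)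
    (hC : ∀ μ' : ℕ → ℝ,
      ((Icc 1 d).filter (fun i => 0 < μ' i)).card = s →
      μ' 1 = μ 1 →
      ((Icc 1 d).sup' (Finset.nonempty_Icc.2 (le_trans (le_trans one_le_two hs) hsd)) μ
        < (Icc 1 d).sup' (Finset.nonempty_Icc.2 (le_trans (le_trans one_le_two hs) hsd)) μ') →
      1 ≤ ∑ i ∈ Icc 1 d, 2 * c i * (μ i - μ' i) ^ 2) :
    ∀ i ∈ Icc 2 s, ∀ j ∈ Icc (s + 1) d, c i * (μ i) ^ 2 + c j * (μ 1) ^ 2 ≥ 1 / 2 := by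
  intro i hi j hj
  rw [mem_Icc] at hi hj
  have hi' : i ∈ Icc 1 d := mem_Icc.2 ⟨by omega, by omega⟩
  have hj' : j ∈ Icc 1 d := mem_Icc.2 ⟨by omega, hj.2⟩
  have hμj : μ j = 0 := hzero j (by omega) hj.2
  -- `μ'` below lies in `B(μ)` for every `y > μ 1`; the claim is the limit `y → μ 1`.
  have key : ∀ y, μ 1 < y → 1 ≤ 2 * c i * μ i ^ 2 + 2 * c j * y ^ 2 := by
    intro y hy
    have hμ1 : 0 < μ 1 := pos_of_mem_Icc_one hsorted hpos (mem_Icc.2 ⟨le_rfl, by omega⟩)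
    have hμi : 0 < μ i := pos_of_mem_Icc_one hsorted hpos (mem_Icc.2 ⟨by omega, hi.2⟩)
    set μ' := update (update μ i 0) j y
    have hcard : #((Icc 1 d).filter fun k => 0 < μ' k) = s := by
      rw [card_filter_pos_update_update hi' hj' hμi hμj.le (hμ1.trans hy),
        filter_pos_eq_Icc_one hsorted hpos hzero hsd, Nat.card_Icc]
      omega
    have hμ'1 : μ' 1 = μ 1 := by
      simp only [μ', update_of_ne (show 1 ≠ j by omega), update_of_ne (show 1 ≠ i by omega)]
    have hsup := (sup'_Icc_one_le hsorted hpos hzero (by omega) ⟨j, hj'⟩).trans_lt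
      (hy.trans_le (le_sup'_of_le μ' hj' (by simp [μ'])))
    have := hC μ' hcard hμ'1 hsup
    rwa [sum_mul_sq_sub_update_update hi' hj' (by omega), hμj, sub_zero, zero_sub, neg_sq] at this
  linarith [ContinuousAt.ge_of_forall_gt (by fun_prop) key]

/-- If `c ∈ ℝ₊^d` satisfies the change-of-measure constraints
`∑ 2cᵢ(μᵢ − μ'ᵢ)² ≥ 1` for every `μ' ∈ B(μ)` (alternative vectors with exactly `s`
positive components, same first component, and a larger maximum), then
`cᵢμᵢ² + c_jμ₁² ≥ 1/2` for every `i ∈ {2,…,s}` and `j ∈ {s+1,…,d}`. -/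
theorem constraint_set_second_condition
    (d s : ℕ) (μ c : ℕ → ℝ) (hs : 2 ≤ s) (hsd : s ≤ d)
    (hsorted : ∀ i j, 1 ≤ i → i ≤ j → j ≤ s → μ j ≤ μ i)
    (hpos : 0 < μ s)
    (hzero : ∀ j, s < j → j ≤ d → μ j = 0)
    (hc : ∀ i, 0 ≤ c i)
    (hC : ∀ μ' : ℕ → ℝ,
      ((Icc 1 d).filter (fun i => 0 < μ' i)).card = s →
      μ' 1 = μ 1 →
      ((Icc 1 d).sup' (Finset.nonempty_Icc.2 (le_trans (le_trans one_le_two hs) hsd)) μ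
        < (Icc 1 d).sup' (Finset.nonempty_Icc.2 (le_trans (le_trans one_le_two hs) hsd)) μ') →
      1 ≤ ∑ i ∈ Icc 1 d, 2 * c i * (μ i - μ' i) ^ 2) :
    ∀ i ∈ Icc 2 s, ∀ j ∈ Icc (s + 1) d, c i * (μ i) ^ 2 + c j * (μ 1) ^ 2 ≥ 1 / 2 :=
  constraint_set_second_condition_general d s μ c hs hsd hsorted hpos hzero hC
end

section
/- Let X₁, X₂, … be i.i.d. real random variables with mean μ > 0 satisfying the Chernoff bound P(X̄_u − μ ≤ −a) ≤ exp(−u a²/2) for all a > 0, where X̄_u is the empirical mean of the first u samples. Then ∑_{u=1}^∞ P(X̄_u < 2√(log u / u)) ≤ 3 + (32/μ²)·log(16/μ²) + 8/μ². -/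
/-!
For `u ≥ t₀ = (32/μ²) log(16/μ²)` one has `log u ≤ μ² u / 16`, so the threshold
`2√(log u / u)` is at most `μ/2` and the event `X̄ᵤ < 2√(log u / u)` forces `X̄ᵤ − μ ≤ −μ/2`,
whose probability is at most `exp(−u μ²/8)` by the Chernoff bound. These tail terms sum to
at most `1/(e^{μ²/8} − 1) ≤ 8/μ²`, and each of the `⌈t₀⌉₊ ≤ t₀ + 2` earlier terms is at most `1`.
-/

open MeasureTheory Real

namespace Real

theorem log_le_div_of_two_mul_mul_log_le {c u : ℝ} (hc : 0 < c) (hu : 0 < u)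
    (h : 2 * c * log c ≤ u) : log u ≤ u / c := by
  have hlog_c : log c ≤ u / (2 * c) := by
    rw [le_div_iff₀ (by positivity)]
    linarith
  have hsplit : log u = log 2 + log c + log (u / (2 * c)) := by
    rw [← log_mul two_ne_zero hc.ne', ← log_mul (by positivity) (by positivity)]
    congr 1
    field_simp
  have hlog_quot : log (u / (2 * c)) ≤ u / (2 * c) - 1 := log_le_sub_one_of_pos (by positivity)
  have hlog_two : log 2 ≤ 1 := by linarith [log_le_sub_one_of_pos (zero_lt_two' ℝ)]
  have hhalves : u / c = u / (2 * c) + u / (2 * c) := by field_simp; ring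
  linarith

theorem neg_two_le_two_mul_mul_log {c : ℝ} (hc : 0 ≤ c) : -2 ≤ 2 * c * log c := by
  linarith [self_sub_one_le_mul_log hc]

theorem two_mul_sqrt_log_div_le_half {μ u : ℝ} (hμ : 0 < μ) (hu : 0 < u)
    (h : 32 / μ ^ 2 * log (16 / μ ^ 2) ≤ u) : 2 * √(log u / u) ≤ μ / 2 := by
  have hlog : log u ≤ u / (16 / μ ^ 2) :=
    log_le_div_of_two_mul_mul_log_le (by positivity) hu (by convert h using 2; ring)
  have hratio : log u / u ≤ (μ / 4) ^ 2 := by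
    rw [div_le_iff₀ hu]
    rw [div_div_eq_mul_div] at hlog
    linarith
  calc 2 * √(log u / u) ≤ 2 * √((μ / 4) ^ 2) := by gcongr
    _ = μ / 2 := by rw [sqrt_sq (by positivity)]; ring

theorem hasSum_exp_neg_succ_mul {x : ℝ} (hx : 0 < x) :
    HasSum (fun j : ℕ => exp (-((j + 1) * x))) (1 / (exp x - 1)) := by
  have hr : exp (-x) < 1 := exp_lt_one_iff.mpr (neg_lt_zero.mpr hx)
  have hterm : ∀ j : ℕ, exp (-x) * exp (-x) ^ j = exp (-((j + 1) * x)) := fun j => by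
    rw [← exp_nat_mul, ← exp_add]
    ring_nf
  have hclosed : exp (-x) * (1 - exp (-x))⁻¹ = 1 / (exp x - 1) := by
    have hex : 1 < exp x := one_lt_exp_iff.mpr hx
    rw [exp_neg]
    field_simp
  simpa only [hterm, hclosed] using
    (hasSum_geometric_of_lt_one (exp_nonneg _) hr).mul_left (exp (-x))

theorem tsum_ofReal_exp_neg_mul_le {x : ℝ} (hx : 0 < x) {g : ℕ → ℝ}
    (hg : ∀ j : ℕ, (j : ℝ) + 1 ≤ g j) :
    ∑' j : ℕ, ENNReal.ofReal (exp (-(g j * x))) ≤ ENNReal.ofReal (1 / x) := by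
  have hle : ∀ j : ℕ, exp (-(g j * x)) ≤ exp (-((j + 1) * x)) := fun j => by
    gcongr
    exact hg j
  calc ∑' j : ℕ, ENNReal.ofReal (exp (-(g j * x)))
      ≤ ∑' j : ℕ, ENNReal.ofReal (exp (-((j + 1) * x))) :=
        ENNReal.tsum_le_tsum fun j => ENNReal.ofReal_le_ofReal (hle j)
    _ = ENNReal.ofReal (1 / (exp x - 1)) := by
        have hsum := hasSum_exp_neg_succ_mul hx
        rw [← ENNReal.ofReal_tsum_of_nonneg (fun _ => exp_nonneg _) hsum.summable, hsum.tsum_eq]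
    _ ≤ ENNReal.ofReal (1 / x) := by
        gcongr
        linarith [add_one_le_exp x]

end Real

theorem Nat.cast_ceil_le_add {R : Type*} [Field R] [LinearOrder R] [IsStrictOrderedRing R]
    [FloorSemiring R] {t a : R} (ha : 1 ≤ a) (ht : -a ≤ t) : (⌈t⌉₊ : R) ≤ t + a := by
  rcases le_or_gt t 0 with ht0 | ht0
  · rw [Nat.ceil_eq_zero.mpr ht0, Nat.cast_zero]
    linarith
  · linarith [Nat.ceil_lt_add_one ht0.le]

theorem ENNReal.tsum_le_natCast_add_tsum_nat_add {f : ℕ → ENNReal} (hf : ∀ i, f i ≤ 1)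
    (n : ℕ) : ∑' i, f i ≤ n + ∑' j, f (j + n) := by
  rw [← ENNReal.summable.sum_add_tsum_nat_add' (k := n)]
  gcongr
  calc ∑ i ∈ Finset.range n, f i ≤ ∑ _i ∈ Finset.range n, 1 :=
        Finset.sum_le_sum fun i _ => hf i
    _ = n := by simp

theorem measure_lt_two_sqrt_log_div_le_exp {Ω : Type*} [MeasurableSpace Ω] (P : Measure Ω)
    (X : Ω → ℝ) {μ : ℝ} (hμ : 0 < μ) {k : ℕ} (hk : 0 < k)
    (hkt : 32 / μ ^ 2 * log (16 / μ ^ 2) ≤ k)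
    (hchernoff : P {ω | X ω - μ ≤ -(μ / 2)} ≤
      ENNReal.ofReal (exp (-(k : ℝ) * (μ / 2) ^ 2 / 2))) :
    P {ω | X ω < 2 * √(log k / k)} ≤ ENNReal.ofReal (exp (-(k * (μ ^ 2 / 8)))) := by
  have hθ := two_mul_sqrt_log_div_le_half hμ (Nat.cast_pos.mpr hk) hkt
  calc P {ω | X ω < 2 * √(log k / k)} ≤ P {ω | X ω - μ ≤ -(μ / 2)} :=
        measure_mono fun ω (hω : X ω < _) => show X ω - μ ≤ -(μ / 2) by linarith
    _ ≤ ENNReal.ofReal (exp (-(k : ℝ) * (μ / 2) ^ 2 / 2)) := hchernoff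
    _ = ENNReal.ofReal (exp (-(k * (μ ^ 2 / 8)))) := by ring_nf

/-- For i.i.d. variables with mean `μ > 0` satisfying the Chernoff bound
`P(X̄ᵤ − μ ≤ −a) ≤ exp(−u a²/2)`, the expected number of times the empirical mean falls
below the activation threshold `2√(log u / u)` is finite:
`∑_{u=1}^∞ P(X̄ᵤ < 2√(log u / u)) ≤ 3 + (32/μ²) log(16/μ²) + 8/μ²`. -/
theorem good_arm_inactive_prob_sum_bound
    {Ω : Type*} [MeasurableSpace Ω] (P : Measure Ω) [IsProbabilityMeasure P]
    (Xbar : ℕ → Ω → ℝ) (μ : ℝ) (hμ : 0 < μ)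
    (hchernoff : ∀ u : ℕ, 1 ≤ u → ∀ a : ℝ, 0 < a →
      P {ω | Xbar u ω - μ ≤ -a} ≤ ENNReal.ofReal (Real.exp (-(u : ℝ) * a ^ 2 / 2))) :
    (∑' u : ℕ,
        P {ω | Xbar (u + 1) ω < 2 * Real.sqrt (Real.log (u + 1 : ℕ) / (u + 1 : ℕ))})
      ≤ ENNReal.ofReal (3 + 32 / μ ^ 2 * Real.log (16 / μ ^ 2) + 8 / μ ^ 2) := by
  set t₀ := 32 / μ ^ 2 * log (16 / μ ^ 2)
  have ht₀ : -2 ≤ t₀ := by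
    convert neg_two_le_two_mul_mul_log (c := 16 / μ ^ 2) (by positivity) using 1
    ring
  have hhead : (⌈t₀⌉₊ : ENNReal) ≤ ENNReal.ofReal (t₀ + 2) := by
    rw [← ENNReal.ofReal_natCast]
    exact ENNReal.ofReal_le_ofReal (Nat.cast_ceil_le_add one_le_two ht₀)
  have htail := tsum_ofReal_exp_neg_mul_le (x := μ ^ 2 / 8) (by positivity)
    (g := fun j => ((j + ⌈t₀⌉₊ + 1 : ℕ) : ℝ)) fun j => by
      push_cast
      linarith [Nat.cast_nonneg (α := ℝ) ⌈t₀⌉₊]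
  calc _ ≤ ⌈t₀⌉₊ + ∑' j : ℕ, P {ω | Xbar (j + ⌈t₀⌉₊ + 1) ω <
          2 * √(log (j + ⌈t₀⌉₊ + 1 : ℕ) / (j + ⌈t₀⌉₊ + 1 : ℕ))} :=
        ENNReal.tsum_le_natCast_add_tsum_nat_add (fun _ => prob_le_one) _
    _ ≤ ENNReal.ofReal (t₀ + 2) + ENNReal.ofReal (1 / (μ ^ 2 / 8)) := by
        refine add_le_add hhead (le_trans (ENNReal.tsum_le_tsum fun j => ?_) htail)
        refine measure_lt_two_sqrt_log_div_le_exp P _ hμ (Nat.succ_pos _) ?_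
          (hchernoff _ (Nat.succ_pos _) _ (by positivity))
        push_cast
        linarith [Nat.le_ceil t₀, (Nat.cast_nonneg j : (0 : ℝ) ≤ j)]
    _ ≤ _ := by
        rw [← ENNReal.ofReal_add (by linarith) (by positivity), one_div_div]
        exact ENNReal.ofReal_le_ofReal (by linarith)
end

section
/- Let X₁, X₂, … be i.i.d. real random variables with mean μ > 0 satisfying P(X̄_u − μ ≤ −a) ≤ exp(−u a²/2) for all a > 0 and u ≥ 1. Then for any T ≥ 1, ∑_{u=1}^∞ P(X̄_u < 2√(log T / u)) ≤ (16 log T + 8)/μ². -/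
open MeasureTheory Real

/-- For i.i.d. variables with mean `μ > 0` satisfying the Chernoff bound
`P(X̄ᵤ − μ ≤ −a) ≤ exp(−u a²/2)`, for any `T ≥ 1`,
`∑_{u=1}^∞ P(X̄ᵤ < 2√(log T / u)) ≤ (16 log T + 8)/μ²`. -/
theorem forcelog_prob_sum_bound
    {Ω : Type*} [MeasurableSpace Ω] (P : Measure Ω) [IsProbabilityMeasure P]
    (Xbar : ℕ → Ω → ℝ) (μ : ℝ) (hμ : 0 < μ)
    (hchernoff : ∀ u : ℕ, 1 ≤ u → ∀ a : ℝ, 0 < a →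
      P {ω | Xbar u ω - μ ≤ -a} ≤ ENNReal.ofReal (Real.exp (-(u : ℝ) * a ^ 2 / 2)))
    (T : ℝ) (hT : 1 ≤ T) :
    (∑' u : ℕ,
        P {ω | Xbar (u + 1) ω < 2 * Real.sqrt (Real.log T / (u + 1 : ℕ))})
      ≤ ENNReal.ofReal ((16 * Real.log T + 8) / μ ^ 2) := by
  have hμ2 : (0:ℝ) < μ ^ 2 := by positivity
  have hlogT : 0 ≤ Real.log T := Real.log_nonneg hT
  set c : ℝ := 16 * Real.log T / μ ^ 2 with hc
  have hc0 : 0 ≤ c := by positivity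
  set N : ℕ := ⌈c - 1⌉₊ with hN
  set r : ℝ := Real.exp (-(μ ^ 2 / 8)) with hr
  have hr0 : 0 < r := Real.exp_pos _
  have hr1 : r < 1 := by
    rw [hr, Real.exp_lt_one_iff]
    nlinarith
  -- pointwise bound
  have hpoint : ∀ u : ℕ,
      P {ω | Xbar (u + 1) ω < 2 * Real.sqrt (Real.log T / (u + 1 : ℕ))}
        ≤ (if u < N then (1:ENNReal) else 0) + ENNReal.ofReal (r ^ (u + 1)) := by
    intro u
    by_cases h : ((u:ℝ) + 1) < c
    · have hu : u < N := by
        rw [hN, Nat.lt_ceil]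
        linarith
      rw [if_pos hu]
      calc P _ ≤ 1 := prob_le_one
        _ ≤ _ := le_self_add
    · push_neg at h
      have hsub : {ω | Xbar (u + 1) ω < 2 * Real.sqrt (Real.log T / (u + 1 : ℕ))}
          ⊆ {ω | Xbar (u + 1) ω - μ ≤ -(μ / 2)} := by
        intro ω hω
        simp only [Set.mem_setOf_eq] at hω ⊢
        have hdiv : Real.log T / ((u:ℝ) + 1) ≤ μ ^ 2 / 16 := by
          rw [hc, div_le_iff₀ hμ2] at h
          rw [div_le_div_iff₀ (by positivity) (by norm_num)]
          nlinarith
        have hs : Real.sqrt (Real.log T / ((u:ℝ) + 1)) ≤ μ / 4 := by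
          have h1 := Real.sqrt_le_sqrt hdiv
          have h4 : Real.sqrt (μ ^ 2 / 16) = μ / 4 := by
            rw [show μ ^ 2 / 16 = (μ / 4) ^ 2 by ring, Real.sqrt_sq (by positivity)]
          linarith
        have hlt : Xbar (u + 1) ω < μ / 2 := by
          have hcast : ((u + 1 : ℕ) : ℝ) = (u:ℝ) + 1 := by push_cast; ring
          rw [hcast] at hω
          linarith
        linarith
      calc P _ ≤ P {ω | Xbar (u + 1) ω - μ ≤ -(μ / 2)} := measure_mono hsub
        _ ≤ ENNReal.ofReal (Real.exp (-((u + 1 : ℕ) : ℝ) * (μ / 2) ^ 2 / 2)) :=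
            hchernoff (u + 1) (Nat.le_add_left 1 u) (μ / 2) (by positivity)
        _ = ENNReal.ofReal (r ^ (u + 1)) := by
            congr 1
            rw [hr, ← Real.exp_nat_mul]
            congr 1
            push_cast
            ring
        _ ≤ _ := le_add_self
  -- the head sum
  have hhead : (∑' u : ℕ, (if u < N then (1:ENNReal) else 0)) ≤ ENNReal.ofReal c := by
    have hsum : (∑' u : ℕ, (if u < N then (1:ENNReal) else 0))
        = ∑ u ∈ Finset.range N, (if u < N then (1:ENNReal) else 0) := by
      apply tsum_eq_sum
      intro b hb
      rw [Finset.mem_range] at hb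
      rw [if_neg hb]
    rw [hsum]
    have : ∑ u ∈ Finset.range N, (if u < N then (1:ENNReal) else 0) = N := by
      rw [Finset.sum_ite_of_true (fun u hu => Finset.mem_range.mp hu)]
      simp
    rw [this]
    have hNc : (N : ℝ) ≤ c := by
      rcases le_or_gt (c - 1) 0 with h | h
      · have : N = 0 := by rw [hN]; exact Nat.ceil_eq_zero.mpr h
        rw [this]; simpa using hc0
      · have := Nat.ceil_lt_add_one h.le
        rw [hN]
        linarith
    calc (N : ENNReal) = ENNReal.ofReal (N : ℝ) := by
          rw [ENNReal.ofReal_natCast]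
      _ ≤ ENNReal.ofReal c := ENNReal.ofReal_le_ofReal hNc
  -- the geometric sum
  have hgeom : (∑' u : ℕ, ENNReal.ofReal (r ^ (u + 1)))
      ≤ ENNReal.ofReal (8 / μ ^ 2) := by
    have hsummable : Summable (fun u : ℕ => r ^ (u + 1)) := by
      apply Summable.comp_injective (summable_geometric_of_lt_one hr0.le hr1)
      exact fun a b hab => by omega
    rw [← ENNReal.ofReal_tsum_of_nonneg (fun u => by positivity) hsummable]
    apply ENNReal.ofReal_le_ofReal
    have hsum : (∑' u : ℕ, r ^ (u + 1)) = r * (1 - r)⁻¹ := by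
      simp only [pow_succ, mul_comm (r ^ _) r]
      rw [tsum_mul_left, tsum_geometric_of_lt_one hr0.le hr1]
    rw [hsum]
    have h1r : 0 < 1 - r := by linarith
    rw [mul_inv_le_iff₀ h1r]
    have hexp := Real.add_one_le_exp (μ ^ 2 / 8)
    have hprod : Real.exp (μ ^ 2 / 8) * r = 1 := by
      rw [hr, ← Real.exp_add]; simp
    rw [div_mul_eq_mul_div, le_div_iff₀ hμ2]
    nlinarith
  calc (∑' u : ℕ, P {ω | Xbar (u + 1) ω < 2 * Real.sqrt (Real.log T / (u + 1 : ℕ))})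
      ≤ ∑' u : ℕ, ((if u < N then (1:ENNReal) else 0) + ENNReal.ofReal (r ^ (u + 1))) :=
        ENNReal.tsum_le_tsum hpoint
    _ = (∑' u : ℕ, (if u < N then (1:ENNReal) else 0))
        + ∑' u : ℕ, ENNReal.ofReal (r ^ (u + 1)) := ENNReal.tsum_add
    _ ≤ ENNReal.ofReal c + ENNReal.ofReal (8 / μ ^ 2) := add_le_add hhead hgeom
    _ = ENNReal.ofReal ((16 * Real.log T + 8) / μ ^ 2) := by
        rw [← ENNReal.ofReal_add hc0 (by positivity)]
        congr 1
        rw [hc]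
        ring
end

section
/- Let X̄¹ and X̄ⁱ denote empirical mean processes of two arms with means μ₁ > μᵢ, Δ = μ₁ − μᵢ > 0. Suppose at time t ≥ 1 with sample counts n₁, nᵢ ≥ 1 that X̄ⁱ(nᵢ) + 2√(log t/nᵢ) ≥ X̄¹(n₁) + 2√(log t/n₁) and nᵢ ≥ 16 log t/Δ². Then at least one of the following holds: X̄ⁱ(nᵢ) − μᵢ ≥ Δ/2, or X̄¹(n₁) − μ₁ ≤ −2√(log t/n₁). -/
open Real

/-- Deterministic case analysis of the classical UCB argument: if the UCB index of a
suboptimal arm `i` exceeds that of the optimal arm `1`, and arm `i` has been sampled at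
least `16 log t / Δ²` times, then either arm `i` overestimates its mean by `Δ/2`, or arm
`1` underestimates its mean by its confidence radius. -/
theorem ucb_case_analysis
    (μ₁ μᵢ Δ t n₁ nᵢ Xbar₁ Xbarᵢ : ℝ)
    (hΔ : Δ = μ₁ - μᵢ) (hΔpos : 0 < Δ)
    (ht : 1 ≤ t) (hn₁ : 1 ≤ n₁) (hnᵢ : 1 ≤ nᵢ)
    (hucb : Xbar₁ + 2 * Real.sqrt (Real.log t / n₁)
      ≤ Xbarᵢ + 2 * Real.sqrt (Real.log t / nᵢ))
    (hsampled : 16 * Real.log t / Δ ^ 2 ≤ nᵢ) :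
    Δ / 2 ≤ Xbarᵢ - μᵢ ∨ Xbar₁ - μ₁ ≤ -(2 * Real.sqrt (Real.log t / n₁)) := by
  have hnipos : (0:ℝ) < nᵢ := lt_of_lt_of_le one_pos hnᵢ
  have hlog : 0 ≤ Real.log t := Real.log_nonneg ht
  have hkey : Real.log t / nᵢ ≤ (Δ/4)^2 := by
    rw [div_le_iff₀ hnipos]
    have h2 : 16 * Real.log t ≤ nᵢ * Δ^2 := by
      have := (div_le_iff₀ (by positivity : (0:ℝ) < Δ^2)).mp hsampled
      linarith
    nlinarith
  have hsqrt : Real.sqrt (Real.log t / nᵢ) ≤ Δ/4 := by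
    calc Real.sqrt (Real.log t / nᵢ) ≤ Real.sqrt ((Δ/4)^2) := Real.sqrt_le_sqrt hkey
    _ = Δ/4 := Real.sqrt_sq (by linarith)
  by_cases hc : Xbar₁ - μ₁ ≤ -(2 * Real.sqrt (Real.log t / n₁))
  · exact Or.inr hc
  · left
    push_neg at hc
    linarith
end
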